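/- Let g(x) = arccos(x) - x·√(1-x²). Then the double integral ∫₀¹ ∫_{√(1-x₁²)}^1 (π - g(x₁) - g(x₂))² dx₂ dx₁ = -π³/16 + π² - 9π/8 - 128/45. -/

import Mathlib

/-!
`g x` is the area of the part of the unit disc to the right of the chord `x₁ = x`, so
`g' x = -2 √(1 - x²)`, and integration by parts gives elementary primitives of `g` and `g²`.
The inner integral is therefore `c²(1 - a) - 2c ∫ₐ¹ g + ∫ₐ¹ g²` with `c = π - g x₁` and
`a = √(1 - x₁²)`; at this lower limit `arccos a = π/2 - arccos x₁` and `√(1 - a²) = x₁`, so it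
becomes an elementary function of `x₁` (polynomials, `arccos x₁`, `√(1 - x₁²)` and products of
these), whose primitive is again elementary.
-/

open Real Set intervalIntegral

noncomputable section

lemma sqrt_one_sub_sq_pos {x : ℝ} (hx : x ∈ Ioo (-1 : ℝ) 1) : 0 < √(1 - x ^ 2) :=
  Real.sqrt_pos.2 (by nlinarith [hx.1, hx.2])

lemma sq_sqrt_one_sub_sq {x : ℝ} (hx : x ∈ Icc (-1 : ℝ) 1) : √(1 - x ^ 2) ^ 2 = 1 - x ^ 2 :=
  Real.sq_sqrt (by nlinarith [hx.1, hx.2])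

lemma hasDerivAt_sqrt_one_sub_sq {x : ℝ} (hx : x ∈ Ioo (-1 : ℝ) 1) :
    HasDerivAt (fun y => √(1 - y ^ 2)) (-x / √(1 - x ^ 2)) x := by
  have hs := sqrt_one_sub_sq_pos hx
  refine (((hasDerivAt_pow 2 x).const_sub 1).sqrt (by nlinarith [hx.1, hx.2])).congr_deriv ?_
  field_simp
  ring

lemma hasDerivAt_sqrt_one_sub_sq_pow_three {x : ℝ} (hx : x ∈ Ioo (-1 : ℝ) 1) :
    HasDerivAt (fun y => √(1 - y ^ 2) ^ 3) (-3 * x * √(1 - x ^ 2)) x := by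
  have hs := sqrt_one_sub_sq_pos hx
  refine ((hasDerivAt_sqrt_one_sub_sq hx).pow 3).congr_deriv ?_
  field_simp
  ring

def segmentArea (x : ℝ) : ℝ := arccos x - x * √(1 - x ^ 2)

lemma hasDerivAt_segmentArea {x : ℝ} (hx : x ∈ Ioo (-1 : ℝ) 1) :
    HasDerivAt segmentArea (-2 * √(1 - x ^ 2)) x := by
  have hs := sqrt_one_sub_sq_pos hx
  have hs2 := sq_sqrt_one_sub_sq (Ioo_subset_Icc_self hx)
  refine ((hasDerivAt_arccos hx.1.ne' hx.2.ne).sub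
    ((hasDerivAt_id' x).mul (hasDerivAt_sqrt_one_sub_sq hx))).congr_deriv ?_
  field_simp
  linear_combination hs2

@[fun_prop]
lemma continuous_segmentArea : Continuous segmentArea := by
  unfold segmentArea; fun_prop

def segmentAreaPrimitive (x : ℝ) : ℝ := x * arccos x - √(1 - x ^ 2) + √(1 - x ^ 2) ^ 3 / 3

/-- `∫ g² = x g² + 4 ∫ x √(1 - x²) g`, and `x √(1 - x²) = -(√(1 - x²)³)' / 3`. -/
def segmentAreaSqPrimitive (x : ℝ) : ℝ :=
  x * segmentArea x ^ 2 - 4 / 3 * √(1 - x ^ 2) ^ 3 * segmentArea x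
    - 8 / 3 * (x - 2 * x ^ 3 / 3 + x ^ 5 / 5)

lemma hasDerivAt_segmentAreaPrimitive {x : ℝ} (hx : x ∈ Ioo (-1 : ℝ) 1) :
    HasDerivAt segmentAreaPrimitive (segmentArea x) x := by
  have hs := sqrt_one_sub_sq_pos hx
  refine ((((hasDerivAt_id' x).mul (hasDerivAt_arccos hx.1.ne' hx.2.ne)).sub
    (hasDerivAt_sqrt_one_sub_sq hx)).add
    ((hasDerivAt_sqrt_one_sub_sq_pow_three hx).div_const 3)).congr_deriv ?_
  rw [segmentArea]
  field_simp
  ring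

lemma hasDerivAt_segmentAreaSqPrimitive {x : ℝ} (hx : x ∈ Ioo (-1 : ℝ) 1) :
    HasDerivAt segmentAreaSqPrimitive (segmentArea x ^ 2) x := by
  have hs2 := sq_sqrt_one_sub_sq (Ioo_subset_Icc_self hx)
  have hg := hasDerivAt_segmentArea hx
  have hpoly : HasDerivAt (fun y : ℝ => y - 2 * y ^ 3 / 3 + y ^ 5 / 5) (1 - 2 * x ^ 2 + x ^ 4) x :=
    (((hasDerivAt_id' x).sub (((hasDerivAt_pow 3 x).const_mul 2).div_const 3)).add
      ((hasDerivAt_pow 5 x).div_const 5)).congr_deriv (by ring)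
  refine ((((hasDerivAt_id' x).mul (hg.fun_pow 2)).sub
    (((hasDerivAt_sqrt_one_sub_sq_pow_three hx).const_mul (4 / 3)).mul hg)).sub
    (hpoly.const_mul (8 / 3))).congr_deriv ?_
  linear_combination 8 / 3 * (√(1 - x ^ 2) ^ 2 + 1 - x ^ 2) * hs2

@[fun_prop]
lemma continuous_segmentAreaPrimitive : Continuous segmentAreaPrimitive := by
  unfold segmentAreaPrimitive; fun_prop

@[fun_prop]
lemma continuous_segmentAreaSqPrimitive : Continuous segmentAreaSqPrimitive := by
  unfold segmentAreaSqPrimitive; fun_prop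

lemma integral_sq_sub_segmentArea (c : ℝ) {a : ℝ} (ha : a ∈ Icc (-1 : ℝ) 1) :
    ∫ x in a..1, (c - segmentArea x) ^ 2 =
      c ^ 2 * (1 - a) + 2 * c * segmentAreaPrimitive a - segmentAreaSqPrimitive a - 64 / 45 := by
  have hIoo : Ioo a 1 ⊆ Ioo (-1) 1 := Ioo_subset_Ioo_left ha.1
  rw [integral_eq_sub_of_hasDerivAt_of_le ha.2
    (f := fun x => c ^ 2 * x - 2 * c * segmentAreaPrimitive x + segmentAreaSqPrimitive x)
    (by fun_prop) ?_ ((by fun_prop : Continuous _).intervalIntegrable _ _)]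
  · have h1 : √(1 - (1 : ℝ) ^ 2) = 0 := by norm_num
    simp only [segmentAreaPrimitive, segmentAreaSqPrimitive, segmentArea, h1, arccos_one]
    ring
  · intro x hx
    exact ((((hasDerivAt_id' x).const_mul (c ^ 2)).sub
      ((hasDerivAt_segmentAreaPrimitive (hIoo hx)).const_mul (2 * c))).add
      (hasDerivAt_segmentAreaSqPrimitive (hIoo hx))).congr_deriv (by ring)

lemma arccos_sqrt_one_sub_sq {u : ℝ} (hu : 0 ≤ u) : arccos √(1 - u ^ 2) = π / 2 - arccos u := by
  rw [arccos_eq_pi_div_two_sub_arcsin, arccos_eq_arcsin hu]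

lemma sqrt_one_sub_sq_sqrt_one_sub_sq {u : ℝ} (hu : u ∈ Icc (0 : ℝ) 1) :
    √(1 - √(1 - u ^ 2) ^ 2) = u := by
  rw [sq_sqrt_one_sub_sq ⟨by linarith [hu.1], hu.2⟩, sub_sub_cancel, Real.sqrt_sq hu.1]

def sliceIntegral (u : ℝ) : ℝ :=
  π ^ 2 - 2 * π * u + u ^ 2 + 4 * π / 3 * u ^ 3 - u ^ 4 - 64 / 45
    + arccos u ^ 2 - 2 * π * arccos u
    + √(1 - u ^ 2) * (-π ^ 2 / 4 + 64 / 45 + 2 * π * u - 148 / 45 * u ^ 2 + 28 / 15 * u ^ 4)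
    - 2 * u * √(1 - u ^ 2) * arccos u

lemma integral_pi_sub_segmentArea_sub_segmentArea {u : ℝ} (hu : u ∈ Icc (0 : ℝ) 1) :
    ∫ x in √(1 - u ^ 2)..1, (π - segmentArea u - segmentArea x) ^ 2 = sliceIntegral u := by
  have hs2 := sq_sqrt_one_sub_sq ⟨by linarith [hu.1], hu.2⟩
  have hs : √(1 - u ^ 2) ∈ Icc (-1 : ℝ) 1 :=
    ⟨by linarith [Real.sqrt_nonneg (1 - u ^ 2)], Real.sqrt_le_one.2 (by nlinarith [hu.1])⟩
  rw [integral_sq_sub_segmentArea _ hs]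
  simp only [segmentAreaPrimitive, segmentAreaSqPrimitive, segmentArea, sliceIntegral,
    arccos_sqrt_one_sub_sq hu.1, sqrt_one_sub_sq_sqrt_one_sub_sq hu]
  linear_combination (-2 * u * arccos u + u ^ 2 - 56 / 45 * √(1 - u ^ 2)
    - 38 / 15 * √(1 - u ^ 2) * u ^ 2 + 8 / 15 * √(1 - u ^ 2) ^ 3) * hs2

lemma hasDerivAt_mul_arccos_sub_sqrt {x : ℝ} (hx : x ∈ Ioo (-1 : ℝ) 1) :
    HasDerivAt (fun y => y * arccos y - √(1 - y ^ 2)) (arccos x) x := by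
  have hs := sqrt_one_sub_sq_pos hx
  refine (((hasDerivAt_id' x).mul (hasDerivAt_arccos hx.1.ne' hx.2.ne)).sub
    (hasDerivAt_sqrt_one_sub_sq hx)).congr_deriv ?_
  field_simp
  ring

lemma hasDerivAt_arccos_sq_primitive {x : ℝ} (hx : x ∈ Ioo (-1 : ℝ) 1) :
    HasDerivAt (fun y => y * arccos y ^ 2 - 2 * √(1 - y ^ 2) * arccos y - 2 * y)
      (arccos x ^ 2) x := by
  have hs := sqrt_one_sub_sq_pos hx
  have ha := hasDerivAt_arccos hx.1.ne' hx.2.ne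
  refine ((((hasDerivAt_id' x).mul (ha.fun_pow 2)).sub
    (((hasDerivAt_sqrt_one_sub_sq hx).const_mul 2).mul ha)).sub
    ((hasDerivAt_id' x).const_mul 2)).congr_deriv ?_
  field_simp
  ring

lemma hasDerivAt_sqrt_one_sub_sq_primitive {x : ℝ} (hx : x ∈ Ioo (-1 : ℝ) 1) :
    HasDerivAt (fun y => (y * √(1 - y ^ 2) - arccos y) / 2) (√(1 - x ^ 2)) x := by
  have hs := sqrt_one_sub_sq_pos hx
  have hs2 := sq_sqrt_one_sub_sq (Ioo_subset_Icc_self hx)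
  refine ((((hasDerivAt_id' x).mul (hasDerivAt_sqrt_one_sub_sq hx)).sub
    (hasDerivAt_arccos hx.1.ne' hx.2.ne)).div_const 2).congr_deriv ?_
  field_simp
  linear_combination -hs2

lemma hasDerivAt_mul_sqrt_one_sub_sq_primitive {x : ℝ} (hx : x ∈ Ioo (-1 : ℝ) 1) :
    HasDerivAt (fun y => -(√(1 - y ^ 2) ^ 3 / 3)) (x * √(1 - x ^ 2)) x :=
  ((hasDerivAt_sqrt_one_sub_sq_pow_three hx).div_const 3).neg.congr_deriv (by ring)

lemma hasDerivAt_sq_mul_sqrt_one_sub_sq_primitive {x : ℝ} (hx : x ∈ Ioo (-1 : ℝ) 1) :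
    HasDerivAt (fun y => (y * √(1 - y ^ 2) - arccos y) / 8 - y * √(1 - y ^ 2) ^ 3 / 4)
      (x ^ 2 * √(1 - x ^ 2)) x := by
  have hs2 := sq_sqrt_one_sub_sq (Ioo_subset_Icc_self hx)
  refine ((((hasDerivAt_sqrt_one_sub_sq_primitive hx).div_const 4).sub
    (((hasDerivAt_id' x).mul (hasDerivAt_sqrt_one_sub_sq_pow_three hx)).div_const 4)).congr_deriv
    ?_).congr_of_eventuallyEq (.of_forall fun y => by simp only [Pi.sub_apply, Pi.mul_apply]; ring)
  linear_combination (-√(1 - x ^ 2) / 4) * hs2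

lemma hasDerivAt_pow_four_mul_sqrt_one_sub_sq_primitive {x : ℝ} (hx : x ∈ Ioo (-1 : ℝ) 1) :
    HasDerivAt (fun y => (y * √(1 - y ^ 2) - arccos y) / 16 - y * √(1 - y ^ 2) ^ 3 / 8
        - y ^ 3 * √(1 - y ^ 2) ^ 3 / 6) (x ^ 4 * √(1 - x ^ 2)) x := by
  have hs2 := sq_sqrt_one_sub_sq (Ioo_subset_Icc_self hx)
  refine ((((hasDerivAt_sq_mul_sqrt_one_sub_sq_primitive hx).div_const 2).sub
    (((hasDerivAt_pow 3 x).mul (hasDerivAt_sqrt_one_sub_sq_pow_three hx)).div_const 6)).congr_deriv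
    ?_).congr_of_eventuallyEq (.of_forall fun y => by simp only [Pi.sub_apply, Pi.mul_apply]; ring)
  linear_combination (-x ^ 2 * √(1 - x ^ 2) / 2) * hs2

lemma hasDerivAt_mul_sqrt_one_sub_sq_mul_arccos_primitive {x : ℝ} (hx : x ∈ Ioo (-1 : ℝ) 1) :
    HasDerivAt (fun y => -((√(1 - y ^ 2) ^ 3 * arccos y + y - y ^ 3 / 3) / 3))
      (x * √(1 - x ^ 2) * arccos x) x := by
  have hs := sqrt_one_sub_sq_pos hx
  have hs2 := sq_sqrt_one_sub_sq (Ioo_subset_Icc_self hx)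
  refine (((((hasDerivAt_sqrt_one_sub_sq_pow_three hx).mul
    (hasDerivAt_arccos hx.1.ne' hx.2.ne)).add (hasDerivAt_id' x)).sub
    ((hasDerivAt_pow 3 x).div_const 3)).div_const 3).neg.congr_deriv ?_
  field_simp
  linear_combination 3 * hs2

def sliceIntegralPrimitive (u : ℝ) : ℝ :=
  π ^ 2 * u - π * u ^ 2 + u ^ 3 / 3 + π * u ^ 4 / 3 - u ^ 5 / 5 - 64 / 45 * u
    + (u * arccos u ^ 2 - 2 * √(1 - u ^ 2) * arccos u - 2 * u)
    - 2 * π * (u * arccos u - √(1 - u ^ 2))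
    + (-π ^ 2 / 4 + 64 / 45) * ((u * √(1 - u ^ 2) - arccos u) / 2)
    + 2 * π * -(√(1 - u ^ 2) ^ 3 / 3)
    - 148 / 45 * ((u * √(1 - u ^ 2) - arccos u) / 8 - u * √(1 - u ^ 2) ^ 3 / 4)
    + 28 / 15 * ((u * √(1 - u ^ 2) - arccos u) / 16 - u * √(1 - u ^ 2) ^ 3 / 8
      - u ^ 3 * √(1 - u ^ 2) ^ 3 / 6)
    - 2 * -((√(1 - u ^ 2) ^ 3 * arccos u + u - u ^ 3 / 3) / 3)

lemma hasDerivAt_sliceIntegralPrimitive {u : ℝ} (hu : u ∈ Ioo (-1 : ℝ) 1) :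
    HasDerivAt sliceIntegralPrimitive (sliceIntegral u) u := by
  have hpoly : HasDerivAt
      (fun y => π ^ 2 * y - π * y ^ 2 + y ^ 3 / 3 + π * y ^ 4 / 3 - y ^ 5 / 5 - 64 / 45 * y)
      (π ^ 2 - 2 * π * u + u ^ 2 + 4 * π / 3 * u ^ 3 - u ^ 4 - 64 / 45) u :=
    (((((((hasDerivAt_id' u).const_mul (π ^ 2)).sub ((hasDerivAt_pow 2 u).const_mul π)).add
      ((hasDerivAt_pow 3 u).div_const 3)).add (((hasDerivAt_pow 4 u).const_mul π).div_const 3)).sub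
      ((hasDerivAt_pow 5 u).div_const 5)).sub
      ((hasDerivAt_id' u).const_mul (64 / 45))).congr_deriv (by ring)
  refine (((((((hpoly.add (hasDerivAt_arccos_sq_primitive hu)).sub
    ((hasDerivAt_mul_arccos_sub_sqrt hu).const_mul (2 * π))).add
    ((hasDerivAt_sqrt_one_sub_sq_primitive hu).const_mul (-π ^ 2 / 4 + 64 / 45))).add
    ((hasDerivAt_mul_sqrt_one_sub_sq_primitive hu).const_mul (2 * π))).sub
    ((hasDerivAt_sq_mul_sqrt_one_sub_sq_primitive hu).const_mul (148 / 45))).add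
    ((hasDerivAt_pow_four_mul_sqrt_one_sub_sq_primitive hu).const_mul (28 / 15))).sub
    ((hasDerivAt_mul_sqrt_one_sub_sq_mul_arccos_primitive hu).const_mul 2)).congr_deriv ?_
  rw [sliceIntegral]
  ring

lemma continuous_sliceIntegralPrimitive : Continuous sliceIntegralPrimitive := by
  unfold sliceIntegralPrimitive; fun_prop

lemma continuous_sliceIntegral : Continuous sliceIntegral := by
  unfold sliceIntegral; fun_prop

end

theorem T2_value
    (g : ℝ → ℝ) (hg : ∀ x, g x = Real.arccos x - x * Real.sqrt (1 - x ^ 2)) :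
    ∫ x₁ in (0:ℝ)..1, ∫ x₂ in (Real.sqrt (1 - x₁ ^ 2))..1,
        (Real.pi - g x₁ - g x₂) ^ 2 =
      -Real.pi ^ 3 / 16 + Real.pi ^ 2 - 9 * Real.pi / 8 - 128 / 45 := by
  obtain rfl : g = segmentArea := funext hg
  have hslice : EqOn (fun u => ∫ x in √(1 - u ^ 2)..1, (π - segmentArea u - segmentArea x) ^ 2)
      sliceIntegral (uIcc 0 1) := fun u hu =>
    integral_pi_sub_segmentArea_sub_segmentArea (by rwa [uIcc_of_le zero_le_one] at hu)
  rw [integral_congr hslice, integral_eq_sub_of_hasDerivAt_of_le zero_le_one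
    continuous_sliceIntegralPrimitive.continuousOn
    (fun u hu => hasDerivAt_sliceIntegralPrimitive (Ioo_subset_Ioo_left (by norm_num) hu))
    (continuous_sliceIntegral.intervalIntegrable 0 1)]
  have h0 : √(1 - (0 : ℝ) ^ 2) = 1 := by norm_num
  have h1 : √(1 - (1 : ℝ) ^ 2) = 0 := by norm_num
  simp only [sliceIntegralPrimitive, h0, h1, arccos_zero, arccos_one]
  ring
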